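/- A subset Ψ ⊆ Φ, the affine root system of type A_2^{(2)}, is a maximal closed subroot system of Φ if and only if one of the following holds: (1) Ψ = Ψ(k, q) for some integer k ≥ 0 and some odd prime number q; (2) Ψ = {±(ε + (2r + 1/2)δ) : r ∈ ℤ} or Ψ = {±(ε + (2r + 3/2)δ) : r ∈ ℤ}; (3) Ψ = {±(2ε + 2rδ) : r ∈ ℤ}. -/

import Mathlib

noncomputable section

variable {V : Type*} [NormedAddCommGroup V] [InnerProductSpace ℝ V]

/-- The Cartan pairing `⟨β, α∨⟩ = 2(β,α)/(α,α)`. -/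
def cartanPair (α β : V) : ℝ := 2 * (inner ℝ β α : ℝ) / (inner ℝ α α : ℝ)

/-- The reflection `s_α` on `V`: `s_α(β) = β - ⟨β,α∨⟩ α`. -/
def reflV (α β : V) : V := β - cartanPair α β • α

/-- The affine reflection `s_x` on `V × ℝ` with respect to the bilinear form
`B((x,a),(y,b)) = (x,y)`. -/
def reflA (x y : V × ℝ) : V × ℝ :=
  y - (2 * (inner ℝ y.1 x.1 : ℝ) / (inner ℝ x.1 x.1 : ℝ)) • x

/-- A finite irreducible reduced crystallographic root system in `V`. -/
structure IsIrreducibleRootSystem (R : Set V) : Prop where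
  finite : R.Finite
  spans : Submodule.span ℝ R = ⊤
  zero_notMem : (0 : V) ∉ R
  reduced : ∀ α ∈ R, ∀ c : ℝ, c • α ∈ R → c = 1 ∨ c = -1
  cartan_int : ∀ α ∈ R, ∀ β ∈ R, ∃ n : ℤ, cartanPair α β = (n : ℝ)
  refl_mem : ∀ α ∈ R, ∀ β ∈ R, reflV α β ∈ R
  irred : ∀ A B : Set V, R = A ∪ B → A.Nonempty → B.Nonempty →
    ∃ a ∈ A, ∃ b ∈ B, (inner ℝ a b : ℝ) ≠ 0

/-- A subroot system of a set `Φ` of affine roots: a nonempty proper subset stable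
under the reflections `s_x`, `x ∈ Ψ`. -/
def IsSubrootSystem (Φ Ψ : Set (V × ℝ)) : Prop :=
  Ψ.Nonempty ∧ Ψ ⊆ Φ ∧ Ψ ≠ Φ ∧ ∀ x ∈ Ψ, ∀ y ∈ Ψ, reflA x y ∈ Ψ

/-- `Ψ` is closed in `Φ`. -/
def IsClosedIn (Φ Ψ : Set (V × ℝ)) : Prop := ∀ x ∈ Ψ, ∀ y ∈ Ψ, x + y ∈ Φ → x + y ∈ Ψ

def IsClosedSubrootSystem (Φ Ψ : Set (V × ℝ)) : Prop :=
  IsSubrootSystem Φ Ψ ∧ IsClosedIn Φ Ψ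

/-- A maximal closed subroot system of `Φ`: any closed subroot system of `Φ`
containing it equals it. -/
def IsMaximalClosedSubrootSystem (Φ Ψ : Set (V × ℝ)) : Prop :=
  IsClosedSubrootSystem Φ Ψ ∧ ∀ Δ, IsClosedSubrootSystem Φ Δ → Ψ ⊆ Δ → Δ = Ψ

/-- A subroot system of a finite root system `R`. -/
def IsSubrootSystemF (R S : Set V) : Prop :=
  S.Nonempty ∧ S ⊆ R ∧ S ≠ R ∧ ∀ α ∈ S, ∀ β ∈ S, reflV α β ∈ S

/-- `S` is closed in the finite root system `R`. -/
def IsClosedInF (R S : Set V) : Prop := ∀ α ∈ S, ∀ β ∈ S, α + β ∈ R → α + β ∈ S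

def IsMaximalClosedSubrootSystemF (R S : Set V) : Prop :=
  (IsSubrootSystemF R S ∧ IsClosedInF R S) ∧
    ∀ T, IsSubrootSystemF R T → IsClosedInF R T → S ⊆ T → T = S

/-- A `ℤ`-linear function on `S`: the restriction to `S` of an additive group
homomorphism from the subgroup of `V` generated by `S` to `ℤ`. -/
def IsZLinearOn (S : Set V) (p : V → ℤ) : Prop :=
  ∃ f : AddSubgroup.closure S →+ ℤ,
    ∀ α, ∀ h : α ∈ S, p α = f ⟨α, AddSubgroup.subset_closure h⟩

/-- An irreducible subset: nonempty and not a union of two nonempty mutually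
orthogonal subsets. -/
def IsIrreducibleSubset (S : Set V) : Prop :=
  S.Nonempty ∧ ∀ A B : Set V, S = A ∪ B → A.Nonempty → B.Nonempty →
    ∃ a ∈ A, ∃ b ∈ B, (inner ℝ a b : ℝ) ≠ 0

/-- `σ` is a sign. -/
def PM (σ : ℝ) : Prop := σ = 1 ∨ σ = -1

/-- The affine root system of type `A_2^{(2)}`, with `ε = 1 ∈ ℝ`. -/
def PhiA22 : Set (ℝ × ℝ) :=
  {x | (∃ σ : ℝ, PM σ ∧ ∃ r : ℤ, x = (σ, (r : ℝ) + 1 / 2)) ∨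
       (∃ σ : ℝ, PM σ ∧ ∃ r : ℤ, x = (2 * σ, 2 * (r : ℝ)))}

/-- The subset `Ψ(k, q)` attached to `k ≥ 0` and an odd prime `q`. -/
def PsiKQ (k q : ℕ) : Set (ℝ × ℝ) :=
  {x | (∃ σ : ℝ, PM σ ∧ ∃ r : ℤ,
          x = (σ, σ * ((k : ℝ) + 1 / 2 + (r : ℝ) * (q : ℝ)))) ∨
       (∃ σ : ℝ, PM σ ∧ ∃ r : ℤ,
          x = (2 * σ, σ * (2 * (k : ℝ) + 1 + (2 * (r : ℝ) + 1) * (q : ℝ))))}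

/-!
Every root `(a, c)` of `Φ` has a level `2c / a ∈ ℤ`, odd for the short roots `±(ε + (t/2)δ)` and
even for the long roots `±(2ε + tδ)`; the roots of a given level are a pair `±x`, and the level of
`s_x(y)` is `2 lev(x) - lev(y)`. Hence a closed subroot system is the set of roots over a set `T`
of levels that is stable under `(t, u) ↦ 2t - u`, so a coset `a + dℤ`, and that contains the level
`(t + u)/2` of the sum of two short roots of levels `t`, `u` whenever this sum is a (long) root.
This extra condition holds exactly when `d` is odd, `a` is even or `4 ∣ d`. The maximal proper
cosets satisfying it, `a + qℤ` with `q` an odd prime, `2ℤ` and `±1 + 4ℤ`, form an antichain and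
every other proper one lies in one of them; they are the four families of the statement.
-/

theorem maximal_iff_mem_of_isAntichain {α : Type*} [PartialOrder α] {P : α → Prop} {M : Set α}
    (hMP : ∀ m ∈ M, P m) (hM : IsAntichain (· ≤ ·) M) (hPM : ∀ x, P x → ∃ m ∈ M, x ≤ m)
    {x : α} : Maximal P x ↔ x ∈ M := by
  refine ⟨fun ⟨hx, hmax⟩ => ?_, fun hx => ⟨hMP x hx, fun y hy hxy => ?_⟩⟩
  · obtain ⟨m, hm, hxm⟩ := hPM x hx
    exact (hxm.antisymm (hmax (hMP m hm) hxm)).symm ▸ hm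
  · obtain ⟨m, hm, hym⟩ := hPM y hy
    exact (hM.eq hx hm (hxy.trans hym)).symm ▸ hym

theorem isMaximalClosedSubrootSystem_iff_maximal {Φ Ψ : Set (V × ℝ)} :
    IsMaximalClosedSubrootSystem Φ Ψ ↔ Maximal (IsClosedSubrootSystem Φ) Ψ :=
  and_congr_right fun _ =>
    ⟨fun h Δ hΔ hΨΔ => (h Δ hΔ hΨΔ).le, fun h _ hΔ hΨΔ => (h hΔ hΨΔ).antisymm hΨΔ⟩

theorem PM.neg {σ : ℝ} (h : PM σ) : PM (-σ) := by
  rcases h with rfl | rfl <;> norm_num [PM]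

namespace A22

open Set

def coset (a : ℤ) (d : ℕ) : Set ℤ := {x | (d : ℤ) ∣ x - a}

theorem mem_coset {a x : ℤ} {d : ℕ} : x ∈ coset a d ↔ (d : ℤ) ∣ x - a := Iff.rfl

theorem self_mem_coset (a : ℤ) (d : ℕ) : a ∈ coset a d := by simp [mem_coset]

theorem coset_subset_coset_iff {a b : ℤ} {d e : ℕ} :
    coset a d ⊆ coset b e ↔ (e : ℤ) ∣ d ∧ (e : ℤ) ∣ a - b := by
  refine ⟨fun h => ?_, fun ⟨hed, hab⟩ x hx => ?_⟩
  · have ha : (e : ℤ) ∣ a - b := h (self_mem_coset a d)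
    have had : (e : ℤ) ∣ a + d - b := h (by simp [mem_coset])
    exact ⟨by simpa using dvd_sub had ha, ha⟩
  · simpa [mem_coset] using dvd_add (dvd_trans hed hx) hab

theorem coset_eq_coset {a b : ℤ} {d : ℕ} (h : (d : ℤ) ∣ a - b) : coset a d = coset b d :=
  (coset_subset_coset_iff.2 ⟨dvd_rfl, h⟩).antisymm
    (coset_subset_coset_iff.2 ⟨dvd_rfl, by simpa using h.neg_right⟩)

theorem coset_eq_univ_iff {a : ℤ} {d : ℕ} : coset a d = univ ↔ d = 1 := by
  refine ⟨fun h => ?_, fun h => by simp [h, coset]⟩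
  have : (d : ℤ) ∣ 1 := by simpa [mem_coset] using (h ▸ mem_univ (a + 1) : a + 1 ∈ coset a d)
  exact_mod_cast Int.eq_one_of_dvd_one (by positivity) this

/-- The translations by `2y`, `y` in the group `gℤ` generated by `S - a`, preserve `S`; so `S` is a
union of cosets of `2gℤ` inside `a + gℤ`, and it cannot lie in one of them unless `g = 0`. -/
theorem exists_eq_coset {S : Set ℤ} {a : ℤ} (ha : a ∈ S)
    (hS : ∀ m ∈ S, ∀ n ∈ S, 2 * m - n ∈ S) : ∃ d : ℕ, S = coset a d := by
  let H : AddSubgroup ℤ :=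
    { carrier := {y | ∀ m ∈ S, m + 2 * y ∈ S}
      zero_mem' := fun m hm => by simpa using hm
      add_mem' := fun hy hz m hm => by simpa [mul_add, add_assoc] using hz _ (hy m hm)
      neg_mem' := fun {y} hy m hm => by convert hS m hm _ (hy m hm) using 1; ring }
  have hdiff : ∀ s ∈ S, s - a ∈ H := fun s hs m hm => by
    convert hS s hs _ (hS a ha m hm) using 1; ring
  set G := AddSubgroup.closure ((· - a) '' S)
  have hGH : G ≤ H := (AddSubgroup.closure_le H).2 (by rintro _ ⟨s, hs, rfl⟩; exact hdiff s hs)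
  obtain ⟨g, hg⟩ := Int.subgroup_cyclic G
  rw [← AddSubgroup.zmultiples_eq_closure] at hg
  have hmemG : ∀ {y}, y ∈ G ↔ g ∣ y := by intro y; rw [hg, Int.mem_zmultiples_iff]
  have hSG : ∀ s ∈ S, g ∣ s - a := fun s hs => hmemG.1 (AddSubgroup.subset_closure ⟨s, hs, rfl⟩)
  refine ⟨g.natAbs, Subset.antisymm (fun s hs => Int.natAbs_dvd.2 (hSG s hs)) (fun x hx => ?_)⟩
  obtain ⟨l, hl⟩ := Int.natAbs_dvd.1 hx
  have hshift : ∀ b ∈ S, ∀ j, x - b = 2 * (g * j) → x ∈ S := fun b hb j h => by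
    simpa [← h] using hGH (hmemG.2 (dvd_mul_right g j)) b hb
  rcases Int.even_or_odd l with ⟨j, rfl⟩ | ⟨j, rfl⟩
  · exact hshift a ha j (by rw [hl]; ring)
  obtain rfl | hg0 := eq_or_ne g 0
  · simpa [show x = a by linarith] using ha
  obtain ⟨s, hs, hs2⟩ : ∃ s ∈ S, ¬ 2 * g ∣ s - a := by
    by_contra! h
    have hG2 : G ≤ AddSubgroup.zmultiples (2 * g) := (AddSubgroup.closure_le _).2 <| by
      rintro _ ⟨s, hs, rfl⟩; exact Int.mem_zmultiples_iff.2 (h s hs)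
    obtain ⟨c, hc⟩ := Int.mem_zmultiples_iff.1 (hG2 (hmemG.2 dvd_rfl))
    have : g * (2 * c - 1) = 0 := by linear_combination -hc
    rcases mul_eq_zero.1 this with h | h
    · exact hg0 h
    · omega
  obtain ⟨k, hk⟩ := hSG s hs
  rcases Int.even_or_odd k with ⟨i, rfl⟩ | ⟨i, rfl⟩
  · exact absurd ⟨i, by rw [hk]; ring⟩ hs2
  · exact hshift s hs (j - i) (by linear_combination hl - hk)

theorem two_mul_sub_mem_coset {a t u : ℤ} {d : ℕ} (ht : t ∈ coset a d) (hu : u ∈ coset a d) :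
    2 * t - u ∈ coset a d := by
  obtain ⟨k, hk⟩ := ht
  obtain ⟨l, hl⟩ := hu
  exact ⟨2 * k - l, by linear_combination 2 * hk - hl⟩

structure IsClosedLevelSystem (T : Set ℤ) : Prop where
  nonempty : T.Nonempty
  ne_univ : T ≠ univ
  two_mul_sub_mem : ∀ t ∈ T, ∀ u ∈ T, 2 * t - u ∈ T
  mem_of_add_eq_two_mul : ∀ t ∈ T, ∀ u ∈ T, ∀ w, Odd t → Even w → t + u = 2 * w → w ∈ T

theorem isClosedLevelSystem_coset_iff {a : ℤ} {d : ℕ} (hd : d ≠ 1) :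
    IsClosedLevelSystem (coset a d) ↔ Odd d ∨ Even a ∨ 4 ∣ d := by
  constructor
  · intro h
    by_contra! hbad
    -- the odd levels `a` and `a + d` have the even midpoint `a + d / 2 ∉ a + dℤ`
    obtain ⟨j, rfl⟩ : ∃ j, d = 4 * j + 2 := ⟨d / 4, by grind⟩
    have ha : Odd a := Int.not_even_iff_odd.1 hbad.2.1
    have hw := h.mem_of_add_eq_two_mul a (self_mem_coset a _) (a + (4 * j + 2 : ℕ))
      (by simp [mem_coset]) (a + 2 * j + 1) ha (by grind) (by push_cast; ring)
    have hle := Int.le_of_dvd (by positivity) (show ((4 * j + 2 : ℕ) : ℤ) ∣ 2 * j + 1 by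
      simpa [mem_coset, add_assoc] using hw)
    omega
  · intro hcond
    refine ⟨⟨a, self_mem_coset a d⟩, mt coset_eq_univ_iff.1 hd,
      fun t ht u hu => two_mul_sub_mem_coset ht hu, fun t ht u hu w htodd hw htu => ?_⟩
    rcases Nat.even_or_odd d with hde | hdo
    · exfalso
      rcases hcond with hdo | ha | h4
      · exact Nat.not_even_iff_odd.2 hdo hde
      · have : Even (t - a) := ht.even (by exact_mod_cast hde)
        exact Int.not_even_iff_odd.2 htodd (by simpa using this.add ha)
      · have h4' : (4 : ℤ) ∣ d := by exact_mod_cast h4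
        obtain ⟨i, hi⟩ := h4'.trans ht
        obtain ⟨k, hk⟩ := h4'.trans hu
        grind
    · have hcop : IsCoprime (d : ℤ) 2 := by
        exact_mod_cast Nat.isCoprime_iff_coprime.2 (Nat.coprime_two_right.2 hdo)
      obtain ⟨k, hk⟩ := ht
      obtain ⟨l, hl⟩ := hu
      exact hcop.dvd_of_dvd_mul_left ⟨k + l, by linear_combination hk + hl - htu⟩

def IsMaximalLevelCoset (a : ℤ) (d : ℕ) : Prop :=
  (d.Prime ∧ Odd d) ∨ (d = 4 ∧ Odd a) ∨ (d = 2 ∧ Even a)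

theorem IsMaximalLevelCoset.isClosedLevelSystem {a : ℤ} {d : ℕ} (h : IsMaximalLevelCoset a d) :
    IsClosedLevelSystem (coset a d) := by
  rcases h with ⟨hp, hd⟩ | ⟨rfl, -⟩ | ⟨rfl, ha⟩
  · exact (isClosedLevelSystem_coset_iff hp.ne_one).2 (Or.inl hd)
  · exact (isClosedLevelSystem_coset_iff (by norm_num)).2 (Or.inr (Or.inr dvd_rfl))
  · exact (isClosedLevelSystem_coset_iff (by norm_num)).2 (Or.inr (Or.inl ha))

theorem IsClosedLevelSystem.exists_isMaximalLevelCoset_superset {a : ℤ} {d : ℕ}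
    (h : IsClosedLevelSystem (coset a d)) :
    ∃ b e, IsMaximalLevelCoset b e ∧ coset a d ⊆ coset b e := by
  have hd : d ≠ 1 := mt coset_eq_univ_iff.2 h.ne_univ
  have superset {e : ℕ} (he : e ∣ d) : coset a d ⊆ coset a e :=
    coset_subset_coset_iff.2 ⟨Int.natCast_dvd_natCast.2 he, by simp⟩
  rcases Nat.even_or_odd d with hde | hdo
  · rcases Int.even_or_odd a with ha | ha
    · exact ⟨a, 2, Or.inr (Or.inr ⟨rfl, ha⟩), superset (even_iff_two_dvd.1 hde)⟩
    · have h4 : 4 ∣ d := (((isClosedLevelSystem_coset_iff hd).1 h).resolve_left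
        (Nat.not_odd_iff_even.2 hde)).resolve_left (Int.not_even_iff_odd.2 ha)
      exact ⟨a, 4, Or.inr (Or.inl ⟨rfl, ha⟩), superset h4⟩
  · exact ⟨a, d.minFac, Or.inl ⟨Nat.minFac_prime hd, hdo.of_dvd_nat d.minFac_dvd⟩,
      superset d.minFac_dvd⟩

theorem IsMaximalLevelCoset.eq_of_subset {a b : ℤ} {d e : ℕ} (h : IsMaximalLevelCoset a d)
    (h' : IsMaximalLevelCoset b e) (hsub : coset a d ⊆ coset b e) : coset a d = coset b e := by
  obtain ⟨hed, hab⟩ := coset_subset_coset_iff.1 hsub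
  replace hed : e ∣ d := Int.natCast_dvd_natCast.1 hed
  suffices d = e by subst this; exact coset_eq_coset hab
  rcases h with ⟨hp, ⟨c, rfl⟩⟩ | ⟨rfl, ha⟩ | ⟨rfl, ha⟩ <;>
    rcases h' with ⟨hp', hodd'⟩ | ⟨rfl, hb⟩ | ⟨rfl, hb⟩
  · exact ((Nat.prime_dvd_prime_iff_eq hp' hp).1 hed).symm
  · omega
  · omega
  · exact absurd ((Nat.prime_dvd_prime_iff_eq hp' Nat.prime_two).1
      (hp'.dvd_of_dvd_pow (show e ∣ 2 ^ 2 from hed))) (hodd'.ne_two_of_dvd_nat dvd_rfl)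
  · rfl
  · obtain ⟨x, rfl⟩ := ha; obtain ⟨y, rfl⟩ := hb; push_cast at hab; omega
  · exact absurd ((Nat.prime_dvd_prime_iff_eq hp' Nat.prime_two).1 hed)
      (hodd'.ne_two_of_dvd_nat dvd_rfl)
  · omega
  · rfl

theorem exists_coset_eq_coset_two_mul_add_one {q : ℕ} (hq : Odd q) (a : ℤ) :
    ∃ k : ℕ, coset a q = coset (2 * k + 1) q := by
  obtain ⟨c, rfl⟩ := hq
  -- `c + 1` inverts `2` modulo `2c + 1`
  obtain ⟨n, hn⟩ : ∃ n, n = (a - 1) * (c + 1) := ⟨_, rfl⟩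
  have hk : (((n % (2 * c + 1 : ℕ)).toNat : ℕ) : ℤ) = n % (2 * c + 1 : ℕ) :=
    Int.toNat_of_nonneg (Int.emod_nonneg _ (by positivity))
  refine ⟨(n % (2 * c + 1 : ℕ)).toNat, coset_eq_coset ⟨2 * (n / (2 * c + 1 : ℕ)) - (a - 1), ?_⟩⟩
  rw [hk, Int.emod_def]
  push_cast
  linear_combination (-2) * hn

theorem reflA_eq {x y : ℝ × ℝ} (hx : x.1 ≠ 0) :
    reflA x y = (-y.1, y.2 - 2 * y.1 * (x.2 / x.1)) := by
  simp only [reflA, Real.inner_apply, Prod.ext_iff, Prod.fst_sub, Prod.snd_sub, Prod.smul_fst,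
    Prod.smul_snd, smul_eq_mul]
  constructor
  · field_simp
    ring
  · field_simp

theorem reflA_self {x : ℝ × ℝ} (hx : x.1 ≠ 0) : reflA x x = -x := by
  rw [reflA_eq hx, Prod.neg_mk]
  congr 1
  field_simp
  ring

def IsRootOfLevel (x : ℝ × ℝ) (t : ℤ) : Prop :=
  ∃ σ, PM σ ∧ (Odd t ∧ x = (σ, σ * t / 2) ∨ Even t ∧ x = (2 * σ, σ * t))

theorem exists_isRootOfLevel (t : ℤ) : ∃ x, IsRootOfLevel x t := by
  rcases Int.even_or_odd t with ht | ht
  · exact ⟨_, 1, Or.inl rfl, Or.inr ⟨ht, rfl⟩⟩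
  · exact ⟨_, 1, Or.inl rfl, Or.inl ⟨ht, rfl⟩⟩

namespace IsRootOfLevel

variable {x y : ℝ × ℝ} {t u w : ℤ}

theorem fst_ne_zero (hx : IsRootOfLevel x t) : x.1 ≠ 0 := by
  obtain ⟨σ, hσ | hσ, ⟨-, rfl⟩ | ⟨-, rfl⟩⟩ := hx <;> simp [hσ]

theorem two_mul_snd (hx : IsRootOfLevel x t) : 2 * x.2 = t * x.1 := by
  obtain ⟨σ, -, ⟨-, rfl⟩ | ⟨-, rfl⟩⟩ := hx <;> simp only <;> ring

theorem unique (hx : IsRootOfLevel x t) (hx' : IsRootOfLevel x u) : t = u := by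
  have := hx.two_mul_snd.symm.trans hx'.two_mul_snd
  exact_mod_cast mul_right_cancel₀ hx.fst_ne_zero this

theorem eq_or_eq_neg (hx : IsRootOfLevel x t) (hy : IsRootOfLevel y t) : y = x ∨ y = -x := by
  obtain ⟨σ, hσ | hσ, ⟨ht, rfl⟩ | ⟨ht, rfl⟩⟩ := hx <;>
  obtain ⟨τ, hτ | hτ, ⟨ht', rfl⟩ | ⟨ht', rfl⟩⟩ := hy <;>
  first
  | exact absurd ht' (Int.not_even_iff_odd.2 ht)
  | exact absurd ht (Int.not_even_iff_odd.2 ht')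
  | (subst hσ hτ; norm_num [Prod.ext_iff, neg_div])

theorem reflA (hx : IsRootOfLevel x t) (hy : IsRootOfLevel y u) :
    IsRootOfLevel (reflA x y) (2 * t - u) := by
  have hx2 : x.2 / x.1 = t / 2 := by
    rw [div_eq_div_iff hx.fst_ne_zero two_ne_zero]; linarith [hx.two_mul_snd]
  rw [reflA_eq hx.fst_ne_zero, hx2]
  obtain ⟨τ, hτ, ⟨hu, rfl⟩ | ⟨hu, rfl⟩⟩ := hy
  · exact ⟨-τ, hτ.neg, Or.inl ⟨(even_two_mul t).sub_odd hu, by push_cast; ring_nf⟩⟩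
  · exact ⟨-τ, hτ.neg, Or.inr ⟨(even_two_mul t).sub hu, by push_cast; ring_nf⟩⟩

/-- Roots add up to a root only if both are short of the same sign, or if they have opposite signs
and different lengths, in which case the sum is the reflection of the short one in the long one. -/
theorem add (hx : IsRootOfLevel x t) (hy : IsRootOfLevel y u) (hxy : IsRootOfLevel (x + y) w) :
    (Odd t ∧ Even w ∧ t + u = 2 * w) ∨ w = 2 * u - t ∨ w = 2 * t - u := by
  obtain ⟨σ, hσ | hσ, ⟨ht, rfl⟩ | ⟨ht, rfl⟩⟩ := hx <;>
  obtain ⟨τ, hτ | hτ, ⟨hu, rfl⟩ | ⟨hu, rfl⟩⟩ := hy <;>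
  obtain ⟨ρ, hρ | hρ, ⟨hw, h⟩ | ⟨hw, h⟩⟩ := hxy <;>
  subst hσ hτ hρ <;> simp only [Prod.mk_add_mk, Prod.ext_iff] at h <;> norm_num at h <;>
  first
  | exact Or.inl ⟨ht, hw, by exact_mod_cast (by linarith : (t : ℝ) + u = 2 * w)⟩
  | exact Or.inr (Or.inl (by exact_mod_cast (by linarith : (w : ℝ) = 2 * u - t)))
  | exact Or.inr (Or.inr (by exact_mod_cast (by linarith : (w : ℝ) = 2 * t - u)))
end IsRootOfLevel

theorem mem_phiA22_iff {x : ℝ × ℝ} : x ∈ PhiA22 ↔ ∃ t, IsRootOfLevel x t := by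
  constructor
  · rintro (⟨σ, rfl | rfl, r, rfl⟩ | ⟨σ, rfl | rfl, r, rfl⟩)
    · exact ⟨2 * r + 1, 1, Or.inl rfl, Or.inl ⟨odd_two_mul_add_one r, by push_cast; ring_nf⟩⟩
    · exact ⟨-(2 * r + 1), -1, Or.inr rfl,
        Or.inl ⟨(odd_two_mul_add_one r).neg, by push_cast; ring_nf⟩⟩
    · exact ⟨2 * r, 1, Or.inl rfl, Or.inr ⟨even_two_mul r, by push_cast; ring_nf⟩⟩
    · exact ⟨-(2 * r), -1, Or.inr rfl, Or.inr ⟨(even_two_mul r).neg, by push_cast; ring_nf⟩⟩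
  · rintro ⟨t, σ, rfl | rfl, ⟨⟨m, rfl⟩, rfl⟩ | ⟨⟨m, rfl⟩, rfl⟩⟩
    · exact Or.inl ⟨1, Or.inl rfl, m, by push_cast; ring_nf⟩
    · exact Or.inr ⟨1, Or.inl rfl, m, by push_cast; ring_nf⟩
    · exact Or.inl ⟨-1, Or.inr rfl, -m - 1, by push_cast; ring_nf⟩
    · exact Or.inr ⟨-1, Or.inr rfl, -m, by push_cast; ring_nf⟩

def rootsOver (T : Set ℤ) : Set (ℝ × ℝ) := {x | ∃ t ∈ T, IsRootOfLevel x t}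

def levels (Ψ : Set (ℝ × ℝ)) : Set ℤ := {t | ∃ x ∈ Ψ, IsRootOfLevel x t}

theorem IsRootOfLevel.mem_rootsOver_iff {x : ℝ × ℝ} {t : ℤ} {T : Set ℤ}
    (hx : IsRootOfLevel x t) : x ∈ rootsOver T ↔ t ∈ T :=
  ⟨fun ⟨_, hu, hx'⟩ => hx'.unique hx ▸ hu, fun ht => ⟨t, ht, hx⟩⟩

theorem rootsOver_univ : rootsOver univ = PhiA22 := by
  ext x; simp [rootsOver, mem_phiA22_iff]

theorem rootsOver_subset_rootsOver_iff {T T' : Set ℤ} : rootsOver T ⊆ rootsOver T' ↔ T ⊆ T' := by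
  refine ⟨fun h t ht => ?_, fun h x ⟨t, ht, hx⟩ => ⟨t, h ht, hx⟩⟩
  obtain ⟨x, hx⟩ := exists_isRootOfLevel t
  exact hx.mem_rootsOver_iff.1 (h (hx.mem_rootsOver_iff.2 ht))

theorem rootsOver_injective : Function.Injective rootsOver := fun _ _ h =>
  (rootsOver_subset_rootsOver_iff.1 h.le).antisymm (rootsOver_subset_rootsOver_iff.1 h.ge)

theorem rootsOver_levels {Ψ : Set (ℝ × ℝ)} (hΨ : IsSubrootSystem PhiA22 Ψ) :
    rootsOver (levels Ψ) = Ψ := by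
  obtain ⟨-, hsub, -, hrefl⟩ := hΨ
  ext x
  refine ⟨fun ⟨t, ⟨y, hy, hyt⟩, hxt⟩ => ?_, fun hx => ?_⟩
  · rcases hyt.eq_or_eq_neg hxt with rfl | rfl
    · exact hy
    · simpa [reflA_self hyt.fst_ne_zero] using hrefl y hy y hy
  · obtain ⟨t, hxt⟩ := mem_phiA22_iff.1 (hsub hx)
    exact ⟨t, ⟨x, hx, hxt⟩, hxt⟩

theorem isClosedSubrootSystem_rootsOver_iff {T : Set ℤ} :
    IsClosedSubrootSystem PhiA22 (rootsOver T) ↔ IsClosedLevelSystem T := by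
  constructor
  · rintro ⟨⟨⟨x, t, ht, -⟩, -, hne, hrefl⟩, hclosed⟩
    refine ⟨⟨t, ht⟩, fun h => hne (by rw [h, rootsOver_univ]), fun t ht u hu => ?_,
      fun t ht u hu w ht_odd hw htu => ?_⟩
    · obtain ⟨x, hx⟩ := exists_isRootOfLevel t
      obtain ⟨y, hy⟩ := exists_isRootOfLevel u
      exact (hx.reflA hy).mem_rootsOver_iff.1
        (hrefl x (hx.mem_rootsOver_iff.2 ht) y (hy.mem_rootsOver_iff.2 hu))
    · have hu_odd : Odd u := by
        simpa [show u = 2 * w - t by omega] using (even_two_mul w).sub_odd ht_odd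
      have hx : IsRootOfLevel (1, (t : ℝ) / 2) t := ⟨1, Or.inl rfl, Or.inl ⟨ht_odd, by simp⟩⟩
      have hy : IsRootOfLevel (1, (u : ℝ) / 2) u := ⟨1, Or.inl rfl, Or.inl ⟨hu_odd, by simp⟩⟩
      have hxy : IsRootOfLevel ((1, (t : ℝ) / 2) + (1, (u : ℝ) / 2)) w := by
        refine ⟨1, Or.inl rfl, Or.inr ⟨hw, ?_⟩⟩
        have : (t : ℝ) + u = 2 * w := by exact_mod_cast htu
        simp only [Prod.mk_add_mk, Prod.ext_iff]
        constructor <;> linarith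
      exact hxy.mem_rootsOver_iff.1 (hclosed _ (hx.mem_rootsOver_iff.2 ht) _
        (hy.mem_rootsOver_iff.2 hu) (mem_phiA22_iff.2 ⟨w, hxy⟩))
  · intro hT
    refine ⟨⟨?_, rootsOver_univ ▸ rootsOver_subset_rootsOver_iff.2 (subset_univ T), ?_, ?_⟩, ?_⟩
    · obtain ⟨t, ht⟩ := hT.nonempty
      obtain ⟨x, hx⟩ := exists_isRootOfLevel t
      exact ⟨x, t, ht, hx⟩
    · rw [← rootsOver_univ]
      exact rootsOver_injective.ne hT.ne_univ
    · rintro x ⟨t, ht, hx⟩ y ⟨u, hu, hy⟩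
      exact ⟨_, hT.two_mul_sub_mem t ht u hu, hx.reflA hy⟩
    · rintro x ⟨t, ht, hx⟩ y ⟨u, hu, hy⟩ hxy
      obtain ⟨w, hw⟩ := mem_phiA22_iff.1 hxy
      refine ⟨w, ?_, hw⟩
      rcases hx.add hy hw with ⟨ht_odd, hw_even, htu⟩ | rfl | rfl
      · exact hT.mem_of_add_eq_two_mul t ht u hu w ht_odd hw_even htu
      · exact hT.two_mul_sub_mem u hu t ht
      · exact hT.two_mul_sub_mem t ht u hu

def maximalRootSystems : Set (Set (ℝ × ℝ)) :=
  {Ψ | ∃ a d, IsMaximalLevelCoset a d ∧ Ψ = rootsOver (coset a d)}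

theorem isClosedSubrootSystem_of_mem_maximalRootSystems :
    ∀ Ψ ∈ maximalRootSystems, IsClosedSubrootSystem PhiA22 Ψ := by
  rintro _ ⟨a, d, h, rfl⟩
  exact isClosedSubrootSystem_rootsOver_iff.2 h.isClosedLevelSystem

theorem isAntichain_maximalRootSystems : IsAntichain (· ≤ ·) maximalRootSystems := by
  rintro _ ⟨a, d, h, rfl⟩ _ ⟨b, e, h', rfl⟩ hne hsub
  exact hne (congrArg rootsOver (h.eq_of_subset h' (rootsOver_subset_rootsOver_iff.1 hsub)))

theorem exists_mem_maximalRootSystems_superset (Ψ : Set (ℝ × ℝ))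
    (hΨ : IsClosedSubrootSystem PhiA22 Ψ) : ∃ Δ ∈ maximalRootSystems, Ψ ≤ Δ := by
  obtain ⟨T, rfl⟩ : ∃ T, rootsOver T = Ψ := ⟨_, rootsOver_levels hΨ.1⟩
  have hT := isClosedSubrootSystem_rootsOver_iff.1 hΨ
  obtain ⟨a, ha⟩ := hT.nonempty
  obtain ⟨d, hd⟩ := exists_eq_coset ha hT.two_mul_sub_mem
  rw [hd] at hT ⊢
  obtain ⟨b, e, h, hsub⟩ := hT.exists_isMaximalLevelCoset_superset
  exact ⟨_, ⟨b, e, h, rfl⟩, rootsOver_subset_rootsOver_iff.2 hsub⟩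

theorem psiKQ_eq_rootsOver {k q : ℕ} (hq : Odd q) :
    PsiKQ k q = rootsOver (coset (2 * k + 1) q) := by
  have hq' : Odd (q : ℤ) := by exact_mod_cast hq
  ext x
  constructor
  · rintro (⟨σ, hσ, r, rfl⟩ | ⟨σ, hσ, r, rfl⟩)
    · refine ⟨2 * k + 1 + q * (2 * r), ⟨2 * r, by ring⟩, σ, hσ, Or.inl ⟨?_, ?_⟩⟩
      · exact (odd_two_mul_add_one _).add_even ((even_two_mul r).mul_left _)
      · push_cast; ring_nf
    · refine ⟨2 * k + 1 + q * (2 * r + 1), ⟨2 * r + 1, by ring⟩, σ, hσ, Or.inr ⟨?_, ?_⟩⟩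
      · exact (odd_two_mul_add_one _).add_odd (hq'.mul (odd_two_mul_add_one r))
      · push_cast; ring_nf
  · rintro ⟨t, ⟨j, hj⟩, σ, hσ, ⟨ht, rfl⟩ | ⟨ht, rfl⟩⟩ <;>
      rw [eq_add_of_sub_eq hj] at ht ⊢ <;>
      rcases Int.even_or_odd j with ⟨r, rfl⟩ | ⟨r, rfl⟩
    · exact Or.inl ⟨σ, hσ, r, by push_cast; ring_nf⟩
    · grind
    · grind
    · exact Or.inr ⟨σ, hσ, r, by push_cast; ring_nf⟩

theorem shortRoots_eq_rootsOver {a : ℤ} (ha : Odd a) :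
    {x : ℝ × ℝ | ∃ σ : ℝ, PM σ ∧ ∃ r : ℤ, x = (σ, σ * (2 * (r : ℝ) + a / 2))} =
      rootsOver (coset a 4) := by
  ext x
  constructor
  · rintro ⟨σ, hσ, r, rfl⟩
    refine ⟨4 * r + a, ⟨r, by push_cast; ring⟩, σ, hσ, Or.inl ⟨?_, by push_cast; ring_nf⟩⟩
    exact (show Even (4 * r) from ⟨2 * r, by ring⟩).add_odd ha
  · rintro ⟨t, ⟨j, hj⟩, σ, hσ, ⟨ht, rfl⟩ | ⟨ht, rfl⟩⟩
    · exact ⟨σ, hσ, j, by rw [eq_add_of_sub_eq hj]; push_cast; ring_nf⟩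
    · grind

theorem longRoots_eq_rootsOver :
    {x : ℝ × ℝ | ∃ σ : ℝ, PM σ ∧ ∃ r : ℤ, x = (2 * σ, σ * (2 * (r : ℝ)))} =
      rootsOver (coset 0 2) := by
  ext x
  constructor
  · rintro ⟨σ, hσ, r, rfl⟩
    exact ⟨2 * r, ⟨r, by push_cast; ring⟩, σ, hσ, Or.inr ⟨even_two_mul r, by push_cast; ring_nf⟩⟩
  · rintro ⟨t, ⟨j, hj⟩, σ, hσ, ⟨ht, rfl⟩ | ⟨ht, rfl⟩⟩
    · grind
    · exact ⟨σ, hσ, j, by rw [eq_add_of_sub_eq hj]; push_cast; ring_nf⟩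

theorem mem_maximalRootSystems_iff (Ψ : Set (ℝ × ℝ)) :
    Ψ ∈ maximalRootSystems ↔
      (∃ k q : ℕ, q.Prime ∧ Odd q ∧ Ψ = PsiKQ k q) ∨
      (Ψ = {x : ℝ × ℝ | ∃ σ : ℝ, PM σ ∧ ∃ r : ℤ, x = (σ, σ * (2 * (r : ℝ) + 1 / 2))} ∨
       Ψ = {x : ℝ × ℝ | ∃ σ : ℝ, PM σ ∧ ∃ r : ℤ, x = (σ, σ * (2 * (r : ℝ) + 3 / 2))}) ∨
      Ψ = {x : ℝ × ℝ | ∃ σ : ℝ, PM σ ∧ ∃ r : ℤ, x = (2 * σ, σ * (2 * (r : ℝ)))} := by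
  have h1 := shortRoots_eq_rootsOver (a := 1) (by decide)
  have h3 := shortRoots_eq_rootsOver (a := 3) (by decide)
  push_cast at h1 h3
  rw [h1, h3, longRoots_eq_rootsOver]
  constructor
  · rintro ⟨a, d, ⟨hp, hd⟩ | ⟨rfl, ha⟩ | ⟨rfl, ha⟩, rfl⟩
    · obtain ⟨k, hk⟩ := exists_coset_eq_coset_two_mul_add_one hd a
      exact Or.inl ⟨k, d, hp, hd, by rw [psiKQ_eq_rootsOver hd, hk]⟩
    · obtain ⟨c, rfl⟩ := ha
      rcases Int.even_or_odd c with ⟨j, rfl⟩ | ⟨j, rfl⟩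
      · exact Or.inr (Or.inl (Or.inl (congrArg rootsOver (coset_eq_coset ⟨j, by push_cast; ring⟩))))
      · exact Or.inr (Or.inl (Or.inr (congrArg rootsOver (coset_eq_coset ⟨j, by push_cast; ring⟩))))
    · obtain ⟨c, rfl⟩ := ha
      exact Or.inr (Or.inr (congrArg rootsOver (coset_eq_coset ⟨c, by push_cast; ring⟩)))
  · rintro (⟨k, q, hp, hq, rfl⟩ | (rfl | rfl) | rfl)
    · exact ⟨2 * k + 1, q, Or.inl ⟨hp, hq⟩, psiKQ_eq_rootsOver hq⟩
    · exact ⟨1, 4, Or.inr (Or.inl ⟨rfl, odd_one⟩), rfl⟩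
    · exact ⟨3, 4, Or.inr (Or.inl ⟨rfl, by decide⟩), rfl⟩
    · exact ⟨0, 2, Or.inr (Or.inr ⟨rfl, by decide⟩), rfl⟩

end A22

/-- Classification of maximal closed subroot systems of the affine
root system of type `A_2^{(2)}`. -/
theorem statement19 (Ψ : Set (ℝ × ℝ)) :
    IsMaximalClosedSubrootSystem PhiA22 Ψ ↔
      (∃ k q : ℕ, q.Prime ∧ Odd q ∧ Ψ = PsiKQ k q) ∨
      (Ψ = {x : ℝ × ℝ | ∃ σ : ℝ, PM σ ∧ ∃ r : ℤ,
              x = (σ, σ * (2 * (r : ℝ) + 1 / 2))} ∨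
       Ψ = {x : ℝ × ℝ | ∃ σ : ℝ, PM σ ∧ ∃ r : ℤ,
              x = (σ, σ * (2 * (r : ℝ) + 3 / 2))}) ∨
      Ψ = {x : ℝ × ℝ | ∃ σ : ℝ, PM σ ∧ ∃ r : ℤ,
              x = (2 * σ, σ * (2 * (r : ℝ)))} := by
  rw [isMaximalClosedSubrootSystem_iff_maximal,
    maximal_iff_mem_of_isAntichain A22.isClosedSubrootSystem_of_mem_maximalRootSystems
      A22.isAntichain_maximalRootSystems A22.exists_mem_maximalRootSystems_superset]
  exact A22.mem_maximalRootSystems_iff Ψ
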